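/- Let M > 0 and 0 < σ̲ ≤ σ̄ be fixed, and let K = [-M, M] × [σ̲², σ̄²]. Let P₀ and (Pₙ)ₙ≥1 be Borel probability measures on K such that Pₙ converges weakly to P₀. For a probability measure P on K define g_P(y) = ∫ LN(y | μ, σ²) dP(μ, σ²) for y > 0, set c_P = ∫₀^∞ y⁻¹ g_P(y) dy, and define the debiased density f_P(y) = c_P⁻¹ y⁻¹ g_P(y). Then the L¹ distance ∫₀^∞ |f_{Pₙ}(y) − f_{P₀}(y)| dy converges to 0 as n → ∞. -/

import Mathlib

open MeasureTheory Real Set Filter Topology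

/-- The lognormal density `LN(y | μ, s)` with mean parameter `μ` and variance `s`
(so the standard deviation is `√s`), for `y > 0`. -/
noncomputable def LNv (μ s y : ℝ) : ℝ :=
  (y * Real.sqrt s * Real.sqrt (2 * Real.pi))⁻¹ *
    Real.exp (-(Real.log y - μ) ^ 2 / (2 * s))

/-- The lognormal mixture density `g_P(y) = ∫ LN(y | μ, σ²) dP(μ, σ²)`,
where a point `p : ℝ × ℝ` is `(μ, σ²)`. -/
noncomputable def mixG (P : Measure (ℝ × ℝ)) (y : ℝ) : ℝ :=
  ∫ p, LNv p.1 p.2 y ∂P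

/-- The normalizing constant `c_P = ∫₀^∞ y⁻¹ g_P(y) dy`. -/
noncomputable def cP (P : Measure (ℝ × ℝ)) : ℝ :=
  ∫ y in Set.Ioi (0 : ℝ), y⁻¹ * mixG P y

/-- The debiased density `f_P(y) = c_P⁻¹ y⁻¹ g_P(y)`. -/
noncomputable def fP (P : Measure (ℝ × ℝ)) (y : ℝ) : ℝ :=
  (cP P)⁻¹ * (y⁻¹ * mixG P y)

open scoped BoundedContinuousFunction

/-! Substituting `y = eˣ` turns `y⁻¹ LN(y | μ, s)` into `e^(s/2 - μ)` times a Gaussian density,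
so by Tonelli `c_P = ∫ e^(s/2 - μ) dP(μ, s)`. Both this integrand and `(μ, s) ↦ LN(y | μ, s)`
are continuous on the compact set `K`, so weak convergence gives `c_{Pₙ} → c_{P₀} > 0` and
`g_{Pₙ} → g_{P₀}` pointwise. Hence the probability densities `f_{Pₙ}` converge pointwise to
`f_{P₀}`, and Scheffé's lemma upgrades this to convergence in `L¹`. -/

theorem tendsto_integral_abs_sub_of_integral_eq {α ι : Type*} [MeasurableSpace α] {μ : Measure α}
    {L : Filter ι} [L.IsCountablyGenerated] {f : α → ℝ} {F : ι → α → ℝ}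
    (hf : Integrable f μ) (hF : ∀ i, Integrable (F i) μ) (hF_nonneg : ∀ i, 0 ≤ᵐ[μ] F i)
    (h_int : ∀ i, ∫ x, F i x ∂μ = ∫ x, f x ∂μ)
    (h_lim : ∀ᵐ x ∂μ, Tendsto (fun i => F i x) L (𝓝 (f x))) :
    Tendsto (fun i => ∫ x, |F i x - f x| ∂μ) L (𝓝 0) := by
  -- `|F - f| = (F - f) + 2 (f - F)⁺` and `∫ (F - f) = 0`, so only the positive part matters.
  have h_split : ∀ i, ∫ x, |F i x - f x| ∂μ = 2 * ∫ x, max (f x - F i x) 0 ∂μ := by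
    intro i
    have h_abs : ∀ x, |F i x - f x| = (F i x - f x) + 2 * max (f x - F i x) 0 := by
      intro x
      rcases le_total (f x) (F i x) with h | h
      · rw [abs_of_nonneg (by linarith), max_eq_right (by linarith)]; ring
      · rw [abs_of_nonpos (by linarith), max_eq_left (by linarith)]; ring
    have h_diff : Integrable (fun x => F i x - f x) μ := (hF i).sub hf
    have h_posPart : Integrable (fun x => max (f x - F i x) 0) μ := (hf.sub (hF i)).pos_part
    simp_rw [h_abs]
    rw [integral_add h_diff (h_posPart.const_mul 2), integral_sub (hF i) hf, h_int,
      integral_const_mul, sub_self, zero_add]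
  have h_pos : Tendsto (fun i => ∫ x, max (f x - F i x) 0 ∂μ) L (𝓝 (∫ _, (0 : ℝ) ∂μ)) := by
    refine tendsto_integral_filter_of_dominated_convergence (fun x => |f x|)
      (.of_forall fun i => (hf.sub (hF i)).pos_part.aestronglyMeasurable)
      (.of_forall fun i => ?_) hf.abs ?_
    · filter_upwards [hF_nonneg i] with x (hx : 0 ≤ F i x)
      rw [Real.norm_eq_abs, abs_of_nonneg (le_max_right _ _)]
      exact max_le (by linarith [le_abs_self (f x), hx]) (abs_nonneg _)
    · filter_upwards [h_lim] with x hx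
      simpa using ((tendsto_const_nhds (x := f x)).sub hx).max (tendsto_const_nhds (x := (0 : ℝ)))
  simp_rw [h_split]
  simpa using h_pos.const_mul 2

theorem integrableOn_Ioi_zero_iff_integrable_exp_smul_comp_exp {E : Type*}
    [NormedAddCommGroup E] [NormedSpace ℝ E] (g : ℝ → E) :
    IntegrableOn g (Ioi 0) ↔ Integrable (fun x => Real.exp x • g (Real.exp x)) := by
  rw [← Real.range_exp, ← image_univ, integrableOn_image_iff_integrableOn_abs_deriv_smul
    MeasurableSet.univ (fun x _ => (Real.hasDerivAt_exp x).hasDerivWithinAt)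
    Real.exp_injective.injOn, integrableOn_univ]
  simp_rw [abs_of_pos (Real.exp_pos _)]

theorem integral_Ioi_zero_eq_integral_exp_smul_comp_exp {E : Type*}
    [NormedAddCommGroup E] [NormedSpace ℝ E] (g : ℝ → E) :
    ∫ y in Ioi 0, g y = ∫ x, Real.exp x • g (Real.exp x) := by
  rw [← Real.range_exp, ← image_univ, integral_image_eq_integral_abs_deriv_smul
    MeasurableSet.univ (fun x _ => (Real.hasDerivAt_exp x).hasDerivWithinAt)
    Real.exp_injective.injOn, Measure.restrict_univ]
  simp_rw [abs_of_pos (Real.exp_pos _)]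

theorem IsCompact.exists_boundedContinuousFunction_eqOn {Ω : Type*} [TopologicalSpace Ω]
    [T4Space Ω] {K : Set Ω} (hK : IsCompact K) {g : Ω → ℝ} (hg : ContinuousOn g K) :
    ∃ G : Ω →ᵇ ℝ, EqOn G g K := by
  have : CompactSpace K := isCompact_iff_compactSpace.1 hK
  obtain ⟨G, -, hG⟩ := BoundedContinuousFunction.exists_forall_mem_domRestrict_eq_of_closed
    (BoundedContinuousFunction.mkOfCompact ⟨K.domRestrict g, hg.domRestrict⟩) hK.isClosed
    (t := univ) (fun _ => trivial) univ_nonempty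
  exact ⟨G, fun x hx => DFunLike.congr_fun hG ⟨x, hx⟩⟩

theorem MeasureTheory.ProbabilityMeasure.ae_mem_of_apply_eq_one {Ω : Type*}
    [MeasurableSpace Ω] (Q : ProbabilityMeasure Ω) {K : Set Ω} (hK : MeasurableSet K)
    (h : Q K = 1) : ∀ᵐ x ∂(Q : Measure Ω), x ∈ K :=
  mem_ae_iff.2 <| (prob_compl_eq_zero_iff hK).2 <| by
    rw [← ProbabilityMeasure.ennreal_coeFn_eq_coeFn_toMeasure, h, ENNReal.coe_one]

theorem MeasureTheory.ProbabilityMeasure.tendsto_integral_of_continuousOn {Ω ι : Type*}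
    [TopologicalSpace Ω] [T4Space Ω] [MeasurableSpace Ω] [OpensMeasurableSpace Ω]
    {L : Filter ι} {P₀ : ProbabilityMeasure Ω} {P : ι → ProbabilityMeasure Ω}
    (hP : Tendsto P L (𝓝 P₀)) {K : Set Ω} (hK : IsCompact K)
    (h₀ : ∀ᵐ x ∂(P₀ : Measure Ω), x ∈ K) (h : ∀ i, ∀ᵐ x ∂(P i : Measure Ω), x ∈ K)
    {g : Ω → ℝ} (hg : ContinuousOn g K) :
    Tendsto (fun i => ∫ x, g x ∂(P i : Measure Ω)) L (𝓝 (∫ x, g x ∂(P₀ : Measure Ω))) := by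
  obtain ⟨G, hG⟩ := hK.exists_boundedContinuousFunction_eqOn hg
  have h_eq : ∀ Q : ProbabilityMeasure Ω, (∀ᵐ x ∂(Q : Measure Ω), x ∈ K) →
      ∫ x, g x ∂(Q : Measure Ω) = ∫ x, G x ∂(Q : Measure Ω) :=
    fun Q hQ => integral_congr_ae (hQ.mono fun x hx => (hG hx).symm)
  simp_rw [h_eq _ h₀, h_eq _ (h _)]
  exact ProbabilityMeasure.tendsto_iff_forall_integral_tendsto.1 hP G

theorem IsCompact.integrable_of_ae_mem {Ω : Type*} [TopologicalSpace Ω] [T2Space Ω]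
    [MeasurableSpace Ω] [OpensMeasurableSpace Ω] {μ : Measure Ω} [IsFiniteMeasure μ]
    {K : Set Ω} (hK : IsCompact K) (hμ : ∀ᵐ x ∂μ, x ∈ K) {g : Ω → ℝ} (hg : ContinuousOn g K) :
    Integrable g μ := by
  simpa only [IntegrableOn, Measure.restrict_eq_self_of_ae_mem hμ] using
    hg.integrableOn_compact (μ := μ) hK

theorem LNv_nonneg (μ s : ℝ) {y : ℝ} (hy : 0 ≤ y) : 0 ≤ LNv μ s y := by
  unfold LNv
  positivity

theorem LNv_exp (μ : ℝ) {s : ℝ} (hs : 0 < s) (x : ℝ) :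
    LNv μ s (Real.exp x) =
      Real.exp (s / 2 - μ) * ProbabilityTheory.gaussianPDFReal (μ - s) s.toNNReal x := by
  unfold LNv ProbabilityTheory.gaussianPDFReal
  rw [Real.log_exp, Real.coe_toNNReal s hs.le, mul_comm (2 * π) s, Real.sqrt_mul hs.le]
  have h_exp : Real.exp (-(x - μ) ^ 2 / (2 * s)) =
      Real.exp (s / 2 - μ) * Real.exp (-(x - (μ - s)) ^ 2 / (2 * s)) * Real.exp x := by
    rw [← Real.exp_add, ← Real.exp_add, Real.exp_eq_exp]
    field_simp
    ring
  rw [h_exp]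
  field_simp

theorem exp_smul_inv_mul_LNv_exp (μ : ℝ) {s : ℝ} (hs : 0 < s) (x : ℝ) :
    Real.exp x • ((Real.exp x)⁻¹ * LNv μ s (Real.exp x)) =
      Real.exp (s / 2 - μ) * ProbabilityTheory.gaussianPDFReal (μ - s) s.toNNReal x := by
  rw [smul_eq_mul, mul_inv_cancel_left₀ (Real.exp_ne_zero x), LNv_exp μ hs]

theorem integrableOn_inv_mul_LNv (μ : ℝ) {s : ℝ} (hs : 0 < s) :
    IntegrableOn (fun y => y⁻¹ * LNv μ s y) (Ioi 0) := by
  rw [integrableOn_Ioi_zero_iff_integrable_exp_smul_comp_exp]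
  simp_rw [exp_smul_inv_mul_LNv_exp μ hs]
  exact (ProbabilityTheory.integrable_gaussianPDFReal _ _).const_mul _

theorem integral_inv_mul_LNv (μ : ℝ) {s : ℝ} (hs : 0 < s) :
    ∫ y in Ioi 0, y⁻¹ * LNv μ s y = Real.exp (s / 2 - μ) := by
  rw [integral_Ioi_zero_eq_integral_exp_smul_comp_exp]
  simp_rw [exp_smul_inv_mul_LNv_exp μ hs]
  rw [integral_const_mul, ProbabilityTheory.integral_gaussianPDFReal_eq_one _
    (by simpa using hs), mul_one]

theorem continuousOn_LNv {y : ℝ} (hy : y ≠ 0) :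
    ContinuousOn (fun p : ℝ × ℝ => LNv p.1 p.2 y) {p | 0 < p.2} := by
  unfold LNv
  refine .mul (.inv₀ (by fun_prop) fun p (hp : 0 < p.2) => by positivity)
    (Real.continuous_exp.comp_continuousOn
      (.div (by fun_prop) (by fun_prop) fun p (hp : 0 < p.2) => by positivity))

section Mixture

variable {ν : Measure (ℝ × ℝ)}

theorem integrable_prod_inv_mul_LNv (h_pos : ∀ᵐ p ∂ν, 0 < p.2)
    (h_exp : Integrable (fun p => Real.exp (p.2 / 2 - p.1)) ν) :
    Integrable (fun q : (ℝ × ℝ) × ℝ => q.2⁻¹ * LNv q.1.1 q.1.2 q.2)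
      (ν.prod (volume.restrict (Ioi 0))) := by
  have h_meas : Measurable fun q : (ℝ × ℝ) × ℝ => q.2⁻¹ * LNv q.1.1 q.1.2 q.2 := by
    unfold LNv; fun_prop
  refine (integrable_prod_iff h_meas.aestronglyMeasurable).2 ⟨?_, h_exp.congr ?_⟩
  · filter_upwards [h_pos] with p hp using integrableOn_inv_mul_LNv p.1 hp
  · filter_upwards [h_pos] with p hp
    rw [← integral_inv_mul_LNv p.1 hp]
    refine setIntegral_congr_fun measurableSet_Ioi fun y (hy : 0 < y) => ?_
    rw [Real.norm_eq_abs, abs_of_nonneg (mul_nonneg (inv_nonneg.2 hy.le) (LNv_nonneg _ _ hy.le))]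

theorem integrableOn_inv_mul_mixG [SFinite ν] (h_pos : ∀ᵐ p ∂ν, 0 < p.2)
    (h_exp : Integrable (fun p => Real.exp (p.2 / 2 - p.1)) ν) :
    IntegrableOn (fun y => y⁻¹ * mixG ν y) (Ioi 0) :=
  (integrable_prod_inv_mul_LNv h_pos h_exp).integral_prod_right.congr
    (.of_forall fun y => integral_const_mul y⁻¹ fun p : ℝ × ℝ => LNv p.1 p.2 y)

theorem cP_eq_integral_exp [SFinite ν] (h_pos : ∀ᵐ p ∂ν, 0 < p.2)
    (h_exp : Integrable (fun p => Real.exp (p.2 / 2 - p.1)) ν) :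
    cP ν = ∫ p, Real.exp (p.2 / 2 - p.1) ∂ν := by
  calc cP ν = ∫ y in Ioi 0, ∫ p, y⁻¹ * LNv p.1 p.2 y ∂ν := by simp only [integral_const_mul]; rfl
    _ = ∫ p, (∫ y in Ioi 0, y⁻¹ * LNv p.1 p.2 y) ∂ν :=
      (integral_integral_swap (integrable_prod_inv_mul_LNv h_pos h_exp)).symm
    _ = ∫ p, Real.exp (p.2 / 2 - p.1) ∂ν :=
      integral_congr_ae (h_pos.mono fun p hp => integral_inv_mul_LNv p.1 hp)

theorem cP_pos [SFinite ν] [NeZero ν] (h_pos : ∀ᵐ p ∂ν, 0 < p.2)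
    (h_exp : Integrable (fun p => Real.exp (p.2 / 2 - p.1)) ν) : 0 < cP ν :=
  cP_eq_integral_exp h_pos h_exp ▸ integral_exp_pos h_exp

theorem integral_fP [SFinite ν] [NeZero ν] (h_pos : ∀ᵐ p ∂ν, 0 < p.2)
    (h_exp : Integrable (fun p => Real.exp (p.2 / 2 - p.1)) ν) :
    ∫ y in Ioi 0, fP ν y = 1 := by
  simp only [fP]
  rw [integral_const_mul, ← cP, inv_mul_cancel₀ (cP_pos h_pos h_exp).ne']

end Mixture

theorem mixG_nonneg (ν : Measure (ℝ × ℝ)) {y : ℝ} (hy : 0 ≤ y) : 0 ≤ mixG ν y :=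
  integral_nonneg fun p => LNv_nonneg p.1 p.2 hy

theorem fP_nonneg (ν : Measure (ℝ × ℝ)) {y : ℝ} (hy : 0 < y) : 0 ≤ fP ν y := by
  have h_cP : 0 ≤ cP ν := setIntegral_nonneg measurableSet_Ioi fun z (hz : 0 < z) =>
    mul_nonneg (inv_nonneg.2 hz.le) (mixG_nonneg ν hz.le)
  exact mul_nonneg (inv_nonneg.2 h_cP) (mul_nonneg (inv_nonneg.2 hy.le) (mixG_nonneg ν hy.le))

theorem debiased_L1_consistency_general (M σl σu : ℝ) (hσl : 0 < σl)
    (K : Set (ℝ × ℝ)) (hK : K = Set.Icc (-M) M ×ˢ Set.Icc (σl ^ 2) (σu ^ 2))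
    (P₀ : ProbabilityMeasure (ℝ × ℝ)) (P : ℕ → ProbabilityMeasure (ℝ × ℝ))
    (hP₀ : P₀ K = 1) (hPn : ∀ n, P n K = 1)
    (hconv : Tendsto P atTop (𝓝 P₀)) :
    Tendsto
      (fun n => ∫ y in Set.Ioi (0 : ℝ),
        |fP (P n : Measure (ℝ × ℝ)) y - fP (P₀ : Measure (ℝ × ℝ)) y|)
      atTop (𝓝 0) := by
  have hK_cpt : IsCompact K := hK ▸ isCompact_Icc.prod isCompact_Icc
  have hK_pos : ∀ p ∈ K, 0 < p.2 := fun p hp =>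
    (pow_pos hσl 2).trans_le (hK ▸ hp : p ∈ Icc (-M) M ×ˢ Icc (σl ^ 2) (σu ^ 2)).2.1
  have h_exp : ContinuousOn (fun p : ℝ × ℝ => Real.exp (p.2 / 2 - p.1)) K := by fun_prop
  have h_supp : ∀ Q : ProbabilityMeasure (ℝ × ℝ), Q K = 1 →
      (∀ᵐ p ∂(Q : Measure (ℝ × ℝ)), p ∈ K) ∧ (∀ᵐ p ∂(Q : Measure (ℝ × ℝ)), 0 < p.2) ∧
        Integrable (fun p => Real.exp (p.2 / 2 - p.1)) (Q : Measure (ℝ × ℝ)) := fun Q hQ =>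
    have hQK := Q.ae_mem_of_apply_eq_one hK_cpt.measurableSet hQ
    ⟨hQK, hQK.mono hK_pos, hK_cpt.integrable_of_ae_mem hQK h_exp⟩
  obtain ⟨hK₀, hpos₀, hexp₀⟩ := h_supp P₀ hP₀
  choose hKn hposn hexpn using fun n => h_supp (P n) (hPn n)
  have h_cP : Tendsto (fun n => cP (P n : Measure (ℝ × ℝ))) atTop (𝓝 (cP P₀)) := by
    simp_rw [cP_eq_integral_exp (hposn _) (hexpn _), cP_eq_integral_exp hpos₀ hexp₀]
    exact ProbabilityMeasure.tendsto_integral_of_continuousOn hconv hK_cpt hK₀ hKn h_exp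
  have h_fP : ∀ y ∈ Ioi (0 : ℝ),
      Tendsto (fun n => fP (P n : Measure (ℝ × ℝ)) y) atTop (𝓝 (fP P₀ y)) := fun y hy =>
    (h_cP.inv₀ (cP_pos hpos₀ hexp₀).ne').mul <| tendsto_const_nhds.mul <|
      ProbabilityMeasure.tendsto_integral_of_continuousOn hconv hK_cpt hK₀ hKn
        ((continuousOn_LNv (ne_of_gt hy)).mono hK_pos)
  refine tendsto_integral_abs_sub_of_integral_eq
    ((integrableOn_inv_mul_mixG hpos₀ hexp₀).const_mul _)
    (fun n => (integrableOn_inv_mul_mixG (hposn n) (hexpn n)).const_mul _)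
    (fun n => (ae_restrict_iff' measurableSet_Ioi).2 (.of_forall fun y => fP_nonneg _))
    (fun n => by rw [integral_fP (hposn n) (hexpn n), integral_fP hpos₀ hexp₀])
    ((ae_restrict_iff' measurableSet_Ioi).2 (.of_forall h_fP))

/-- If `Pₙ → P₀` weakly, all supported on `K = [-M, M] × [σ̲², σ̄²]`, then the debiased
densities `f_{Pₙ}` converge to `f_{P₀}` in `L¹(0, ∞)`. -/
theorem debiased_L1_consistency (M σl σu : ℝ) (hM : 0 < M) (hσl : 0 < σl) (hσ : σl ≤ σu)
    (K : Set (ℝ × ℝ)) (hK : K = Set.Icc (-M) M ×ˢ Set.Icc (σl ^ 2) (σu ^ 2))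
    (P₀ : ProbabilityMeasure (ℝ × ℝ)) (P : ℕ → ProbabilityMeasure (ℝ × ℝ))
    (hP₀ : P₀ K = 1) (hPn : ∀ n, P n K = 1)
    (hconv : Tendsto P atTop (𝓝 P₀)) :
    Tendsto
      (fun n => ∫ y in Set.Ioi (0 : ℝ),
        |fP (P n : Measure (ℝ × ℝ)) y - fP (P₀ : Measure (ℝ × ℝ)) y|)
      atTop (𝓝 0) :=
  debiased_L1_consistency_general M σl σu hσl K hK P₀ P hP₀ hPn hconv
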